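/- arXiv:1908.05988 — 3 statements merged into one kernel-verified Lean document; each statement's English description precedes it below -/
import Mathlib

section
/- Balinski's theorem: the edge graph (1-skeleton graph) of a d-dimensional convex polytope is d-connected, i.e., deleting any d-1 vertices leaves the graph connected. -/
/-- A polyhedron: a finite intersection of affine halfspaces in `ℝ^n`. -/
def IsPolyhedron {n : ℕ} (P : Set (Fin n → ℝ)) : Prop :=
  ∃ s : Finset ((Fin n → ℝ) × ℝ), P = {x | ∀ p ∈ s, ∑ i, p.1 i * x i ≤ p.2}

/-- A rational polyhedron: cut out by finitely many rational affine halfspaces. -/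
def IsRationalPolyhedron {n : ℕ} (P : Set (Fin n → ℝ)) : Prop :=
  ∃ s : Finset ((Fin n → ℚ) × ℚ), P = {x | ∀ p ∈ s, ∑ i, (p.1 i : ℝ) * x i ≤ (p.2 : ℝ)}

/-- Dimension of a subset of `ℝ^n`: the dimension of its affine span. -/
noncomputable def polyDim {n : ℕ} (P : Set (Fin n → ℝ)) : ℕ :=
  Module.finrank ℝ (vectorSpan ℝ P)

/-- A polyhedral complex in `ℝ^n` (faces are nonempty polyhedra, closed under
nonempty pairwise intersection). -/
structure PolyhedralComplex (n : ℕ) where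
  faces : Set (Set (Fin n → ℝ))
  poly : ∀ P ∈ faces, IsPolyhedron P
  nonempty : ∀ P ∈ faces, P.Nonempty
  inter_mem : ∀ P ∈ faces, ∀ Q ∈ faces, (P ∩ Q).Nonempty → P ∩ Q ∈ faces

namespace PolyhedralComplex

variable {n : ℕ}

/-- The support of a polyhedral complex. -/
def support (C : PolyhedralComplex n) : Set (Fin n → ℝ) := ⋃₀ C.faces

/-- The facets: faces of dimension `d`. -/
def facets (C : PolyhedralComplex n) (d : ℕ) : Set (Set (Fin n → ℝ)) :=
  {P | P ∈ C.faces ∧ polyDim P = d}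

/-- The ridges: faces of dimension `d - 1`. -/
def ridges (C : PolyhedralComplex n) (d : ℕ) : Set (Set (Fin n → ℝ)) :=
  {P | P ∈ C.faces ∧ polyDim P = d - 1}

/-- Pure of dimension `d`: every face is contained in a `d`-dimensional face. -/
def IsPure (C : PolyhedralComplex n) (d : ℕ) : Prop :=
  (∀ P ∈ C.faces, polyDim P ≤ d) ∧ ∀ P ∈ C.faces, ∃ Q ∈ C.facets d, P ⊆ Q

def IsRational (C : PolyhedralComplex n) : Prop := ∀ P ∈ C.faces, IsRationalPolyhedron P

/-- Pointed: no face contains an affine line. -/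
def IsPointed (C : PolyhedralComplex n) : Prop :=
  ∀ P ∈ C.faces, ¬ ∃ (x v : Fin n → ℝ), v ≠ 0 ∧ ∀ t : ℝ, x + t • v ∈ P

/-- Adjacency in the facet-ridge hypergraph after deleting the facets in `G`
(and all hyperedges incident to them). -/
def Adj (C : PolyhedralComplex n) (d : ℕ) (G : Finset (Set (Fin n → ℝ)))
    (P Q : Set (Fin n → ℝ)) : Prop :=
  P ∈ C.facets d ∧ Q ∈ C.facets d ∧ P ∉ G ∧ Q ∉ G ∧
    ∃ R ∈ C.ridges d, R ⊆ P ∧ R ⊆ Q ∧ ∀ F ∈ G, ¬ R ⊆ F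

/-- `k`-connectedness through codimension one of a pure `d`-dimensional complex:
deleting any `k - 1` closed facets leaves the facet-ridge hypergraph connected. -/
def ConnectedThroughCodimOne (C : PolyhedralComplex n) (d k : ℕ) : Prop :=
  ∀ G : Finset (Set (Fin n → ℝ)), ↑G ⊆ C.facets d → G.card < k →
    ∀ P ∈ C.facets d, ∀ Q ∈ C.facets d, P ∉ G → Q ∉ G →
      Relation.ReflTransGen (C.Adj d G) P Q

end PolyhedralComplex

/-- A (nonarchimedean, additively written) real-valued valuation on a field. -/
structure TropValuation (K : Type*) [Field K] where
  val : K → ℝ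
  map_one : val 1 = 0
  map_mul : ∀ x y : K, x ≠ 0 → y ≠ 0 → val (x * y) = val x + val y
  map_add : ∀ x y : K, x ≠ 0 → y ≠ 0 → x + y ≠ 0 → min (val x) (val y) ≤ val (x + y)

/-- The zero set in the torus `(K*)^n` of an ideal of polynomials. -/
def torusZeroSet {K : Type*} [Field K] {n : ℕ} (I : Ideal (MvPolynomial (Fin n) K)) :
    Set (Fin n → Kˣ) :=
  {x | ∀ f ∈ I, MvPolynomial.eval (fun i => (x i : K)) f = 0}

/-- Tropicalization: closure of the coordinatewise valuation image. -/
def tropicalize {K : Type*} [Field K] (w : TropValuation K) {n : ℕ}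
    (X : Set (Fin n → Kˣ)) : Set (Fin n → ℝ) :=
  closure {p : Fin n → ℝ | ∃ x ∈ X, ∀ i, p i = w.val ((x i : K))}

/-- `S` is the tropicalization of an irreducible subvariety of the torus `(K*)^n`. -/
def IsTropOfIrred (K : Type*) [Field K] (w : TropValuation K) {n : ℕ}
    (S : Set (Fin n → ℝ)) : Prop :=
  ∃ I : Ideal (MvPolynomial (Fin n) K), I.IsPrime ∧ S = tropicalize w (torusZeroSet I)

/-- The vanishing ideal of a subset of the torus `(K*)^n`. -/
def vanishingIdeal {K : Type*} [Field K] {n : ℕ} (S : Set (Fin n → Kˣ)) :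
    Ideal (MvPolynomial (Fin n) K) where
  carrier := {f | ∀ x ∈ S, MvPolynomial.eval (fun i => (x i : K)) f = 0}
  add_mem' := by
    intro a b ha hb x hx
    simp [map_add, ha x hx, hb x hx]
  zero_mem' := by intro x hx; simp
  smul_mem' := by
    intro c f hf x hx
    simp [smul_eq_mul, map_mul, hf x hx]

/-- The affine hyperplane with normal vector `a` and level `b`. -/
def hplane {n : ℕ} (a : Fin n → ℝ) (b : ℝ) : Set (Fin n → ℝ) := {x | ∑ i, a i * x i = b}

/-- The ray spanned by a vector. -/
def ray {n : ℕ} (u : Fin n → ℝ) : Set (Fin n → ℝ) := {x | ∃ t : ℝ, 0 ≤ t ∧ x = t • u}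

/-- The cone spanned by two vectors. -/
def cone2 {n : ℕ} (u v : Fin n → ℝ) : Set (Fin n → ℝ) :=
  {x | ∃ s t : ℝ, 0 ≤ s ∧ 0 ≤ t ∧ x = s • u + t • v}

def IsIntVec {n : ℕ} (v : Fin n → ℝ) : Prop := ∀ i, ∃ k : ℤ, v i = (k : ℝ)

def IsPrimitiveVec {n : ℕ} (v : Fin n → ℝ) : Prop :=
  IsIntVec v ∧ v ≠ 0 ∧ ∀ (k : ℕ) (w : Fin n → ℝ), IsIntVec w → v = (k : ℝ) • w → k = 1

/-- Primitive integer vector modulo the subspace `W`. -/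
def PrimitiveMod {n : ℕ} (W : Submodule ℝ (Fin n → ℝ)) (v : Fin n → ℝ) : Prop :=
  IsIntVec v ∧ v ∉ W ∧
    ∀ m : ℕ, 2 ≤ m → ∀ w : Fin n → ℝ, IsIntVec w → v - (m : ℝ) • w ∈ W → w ∈ W

/-- `v` points from the ridge `τ` into the facet `σ`. -/
def PointsInto {n : ℕ} (τ σ : Set (Fin n → ℝ)) (v : Fin n → ℝ) : Prop :=
  ∃ x ∈ τ, ∃ δ : ℝ, 0 < δ ∧ ∀ t : ℝ, 0 < t → t ≤ δ → x + t • v ∈ σ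

/-- The tropical balancing condition with weights `m` at every ridge. -/
def PolyhedralComplex.IsBalanced {n : ℕ} (C : PolyhedralComplex n) (d : ℕ)
    (m : Set (Fin n → ℝ) → ℕ) : Prop :=
  (∀ σ ∈ C.facets d, 0 < m σ) ∧
  ∀ τ ∈ C.ridges d, ∃ (S : Finset (Set (Fin n → ℝ))) (v : Set (Fin n → ℝ) → (Fin n → ℝ)),
    (↑S = {σ | σ ∈ C.facets d ∧ τ ⊆ σ}) ∧
    (∀ σ ∈ S, PrimitiveMod (vectorSpan ℝ τ) (v σ) ∧ v σ ∈ vectorSpan ℝ σ ∧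
      PointsInto τ σ (v σ)) ∧
    (∑ σ ∈ S, (m σ : ℝ) • v σ) ∈ vectorSpan ℝ τ

/-- The face of `P` on which the linear functional `w` is maximized. -/
def maxFace {n : ℕ} (P : Set (Fin n → ℝ)) (w : Fin n → ℝ) : Set (Fin n → ℝ) :=
  {x | x ∈ P ∧ ∀ y ∈ P, ∑ i, w i * y i ≤ ∑ i, w i * x i}

/-- The cone of the normal fan of `P` associated to the face maximizing `w`. -/
def normalFanCone {n : ℕ} (P : Set (Fin n → ℝ)) (w : Fin n → ℝ) : Set (Fin n → ℝ) :=
  {u | maxFace P w ⊆ maxFace P u}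

/-!
Fix `x ∉ S`. Since `S ∪ {x}` has at most `d` points, some nonzero linear functional `f` is constant
on it, and `f` is not constant on the full-dimensional polytope `P`. After replacing `f` by `-f`
if necessary, `f x ≤ f y` and `f x` is not the maximum of `f` on `P`. From every vertex that does
not maximize `f` some edge increases `f`, so `x` and `y` climb along `f`-increasing paths, which
miss `S`, to the face of `P` where `f` is maximal. That face misses `S`, and its edge graph is
connected: every vertex climbs to the unique maximizer of a functional injective on the vertices.

The increasing edge at a vertex `v` comes from the vertex figure: a hyperplane `g = c` separates
`v` from the other vertices, every point of `P` lies on a ray from `v` through the section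
`P ∩ {g = c}`, and the ray through an `f`-maximal extreme point of the section meets `P` in an
edge.
-/

open Set

section Dual

variable {K E : Type*} [Field K] [AddCommGroup E] [Module K E]

theorem exists_dual_injOn [Infinite K] {V : Set E} (hV : V.Finite) :
    ∃ h : Module.Dual K E, InjOn h V := by
  classical
  set kers : Finset (Submodule K (Module.Dual K E)) :=
    ((hV.toFinset ×ˢ hV.toFinset).filter fun p => p.1 ≠ p.2).image
      fun p => LinearMap.ker (Module.Dual.eval K E (p.1 - p.2))
  have htop : ⊤ ∉ kers := by
    simp only [kers, Finset.mem_image, Finset.mem_filter, not_exists, not_and]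
    rintro p ⟨-, hne⟩ hker
    refine sub_ne_zero.2 hne ((Module.forall_dual_apply_eq_zero_iff K _).1 fun φ => ?_)
    simpa using DFunLike.congr_fun (LinearMap.ker_eq_top.1 hker) φ
  obtain ⟨h, hh⟩ := (ne_univ_iff_exists_notMem _).1 (Subspace.biUnion_ne_univ_of_top_notMem htop)
  refine ⟨h, fun a ha b hb hab => by_contra fun hne => hh (mem_iUnion₂.2
    ⟨LinearMap.ker (Module.Dual.eval K E (a - b)), ?_, ?_⟩)⟩
  · exact Finset.mem_image.2 ⟨(a, b), by simp [ha, hb, hne], rfl⟩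
  · simp [hab]

theorem exists_dual_ne_zero_apply_eq_of_card_lt_finrank [FiniteDimensional K E] {S : Finset E}
    (hS : S.card < Module.finrank K E) (x : E) :
    ∃ f : Module.Dual K E, f ≠ 0 ∧ ∀ s ∈ S, f s = f x := by
  classical
  set U := Submodule.span K (S.image (· - x) : Set E)
  have hU : U < ⊤ := by
    refine lt_top_iff_ne_top.2 fun htop => ?_
    have h₁ : Module.finrank K U ≤ _ := finrank_span_finset_le_card (S.image (· - x))
    have h₂ := S.card_image_le (f := (· - x))
    rw [htop, finrank_top] at h₁
    omega
  obtain ⟨f, hf, hUf⟩ := Submodule.exists_dual_map_eq_bot_of_lt_top hU inferInstance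
  refine ⟨f, hf, fun s hs => ?_⟩
  have : f (s - x) ∈ U.map f :=
    Submodule.mem_map_of_mem (Submodule.subset_span (Finset.mem_image_of_mem _ hs))
  rwa [hUf, Submodule.mem_bot, map_sub, sub_eq_zero] at this

theorem exists_apply_ne_of_affineSpan_eq_top {P : Set E} (hP : affineSpan K P = ⊤)
    {f : Module.Dual K E} (hf : f ≠ 0) (x : E) : ∃ p ∈ P, f p ≠ f x := by
  by_contra! hconst
  have hle : affineSpan K P ≤ AffineSubspace.mk' x (LinearMap.ker f) :=
    affineSpan_le.2 fun p hp => by simp [AffineSubspace.mem_mk', hconst p hp]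
  refine hf (LinearMap.ext fun e => ?_)
  have he := hle (hP ▸ AffineSubspace.mem_top K E (e +ᵥ x))
  rwa [AffineSubspace.mem_mk', vadd_vsub, LinearMap.mem_ker] at he

end Dual

section RealVectorSpace

variable {E : Type*} [AddCommGroup E] [Module ℝ E]

theorem left_mem_extremePoints_segment (a b : E) : a ∈ (segment ℝ a b).extremePoints ℝ := by
  refine ⟨left_mem_segment ℝ a b, ?_⟩
  rintro x₁ hx₁ x₂ hx₂ ⟨α, β, hα, hβ, hαβ, hx⟩
  rw [segment_eq_image'] at hx₁ hx₂
  obtain ⟨s, ⟨hs, -⟩, rfl⟩ := hx₁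
  obtain ⟨t, ⟨ht, -⟩, rfl⟩ := hx₂
  have h : (α * s + β * t) • (b - a) = 0 := by
    linear_combination (norm := module) hx - hαβ • a
  rcases smul_eq_zero.1 h with h | h
  · obtain rfl : s = 0 := by nlinarith [mul_nonneg hα.le hs, mul_nonneg hβ.le ht]
    simp
  · simp [h]

def IsEdge (P : Set E) (a b : E) : Prop :=
  a ≠ b ∧ IsExtreme ℝ P (segment ℝ a b)

namespace IsEdge

variable {P T : Set E} {a b : E}

theorem symm (h : IsEdge P a b) : IsEdge P b a :=
  ⟨h.1.symm, segment_symm ℝ a b ▸ h.2⟩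

instance (P : Set E) : Std.Symm (IsEdge P) := ⟨fun _ _ => symm⟩

theorem left_mem_extremePoints (h : IsEdge P a b) : a ∈ P.extremePoints ℝ :=
  h.2.extremePoints_subset_extremePoints (left_mem_extremePoints_segment a b)

theorem right_mem_extremePoints (h : IsEdge P a b) : b ∈ P.extremePoints ℝ :=
  h.symm.left_mem_extremePoints

theorem of_isExtreme (hT : IsExtreme ℝ P T) (h : IsEdge T a b) : IsEdge P a b :=
  ⟨h.1, hT.trans h.2⟩

end IsEdge

def IsEdgeAvoiding (P S : Set E) (a b : E) : Prop :=
  a ∈ P.extremePoints ℝ \ S ∧ b ∈ P.extremePoints ℝ \ S ∧ IsEdge P a b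

instance (P S : Set E) : Std.Symm (IsEdgeAvoiding P S) := ⟨fun _ _ h => ⟨h.2.1, h.1, h.2.2.symm⟩⟩

theorem reflTransGen_isEdgeAvoiding_of_increasing {P S : Set E} {f : E →ₗ[ℝ] ℝ} {a b : E}
    (ha : a ∈ P.extremePoints ℝ \ S) (hS : ∀ s ∈ S, f s ≤ f a)
    (h : Relation.ReflTransGen (fun p q => IsEdge P p q ∧ f p < f q) a b) :
    Relation.ReflTransGen (IsEdgeAvoiding P S) a b := by
  suffices Relation.ReflTransGen (IsEdgeAvoiding P S) a b ∧ b ∈ P.extremePoints ℝ \ S ∧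
      f a ≤ f b from this.1
  induction h with
  | refl => exact ⟨.refl, ha, le_rfl⟩
  | tail _ hbc ih =>
    obtain ⟨hpath, hb, hab⟩ := ih
    have hc := hbc.1.right_mem_extremePoints
    have hcS : _ ∉ S := fun hcS => (hS _ hcS).not_gt (hab.trans_lt hbc.2)
    exact ⟨hpath.tail ⟨hb, ⟨hc, hcS⟩, hbc.1⟩, ⟨hc, hcS⟩, hab.trans hbc.2.le⟩

def IsConeOverSlice (Q : Set E) (v : E) (g : E →ₗ[ℝ] ℝ) (c : ℝ) : Prop :=
  ∀ p ∈ Q, ∃ s : ℝ, 0 ≤ s ∧ ∃ y ∈ Q, g y = c ∧ p = v + s • (y - v)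

theorem isConeOverSlice_convexJoin {K : Set E} {v : E} {g : E →ₗ[ℝ] ℝ} {c : ℝ}
    (hv : g v < c) (hK : ∀ k ∈ K, c < g k) : IsConeOverSlice (convexJoin ℝ {v} K) v g c := by
  intro p hp
  obtain ⟨w, hw, k, hk, hp⟩ := mem_convexJoin.1 hp
  rw [mem_singleton_iff.1 hw, segment_eq_image'] at hp
  obtain ⟨b, ⟨hb, -⟩, rfl⟩ := hp
  have hgk : 0 < g k - g v := by linarith [hK k hk]
  set l := (c - g v) / (g k - g v)
  have hl : 0 < l := div_pos (by linarith) hgk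
  have hl₁ : l ≤ 1 := (div_le_one hgk).2 (by linarith [hK k hk])
  refine ⟨b / l, div_nonneg hb hl.le, v + l • (k - v), ?_, ?_, ?_⟩
  · exact mem_convexJoin.2 ⟨v, rfl, k, hk, segment_eq_image' ℝ v k ▸ ⟨l, ⟨hl.le, hl₁⟩, rfl⟩⟩
  · simp only [map_add, map_smul, map_sub, smul_eq_mul, l]
    field_simp
    ring
  · rw [add_sub_cancel_left, smul_smul, div_mul_cancel₀ _ hl.ne']

theorem IsConeOverSlice.isExtreme_inter_ray {Q : Set E} {v z : E} {g : E →ₗ[ℝ] ℝ} {c : ℝ}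
    (hQ : IsConeOverSlice Q v g c) (hc : g v ≠ c)
    (hz : z ∈ (Q ∩ {y | g y = c}).extremePoints ℝ) :
    IsExtreme ℝ Q (Q ∩ (fun t : ℝ => v + t • (z - v)) '' Ici 0) := by
  refine ⟨inter_subset_left, ?_⟩
  rintro p hp q hq x ⟨-, r, -, rfl⟩ ⟨a, b, ha, hb, hab, hx⟩
  refine ⟨hp, ?_⟩
  obtain ⟨s, hs, y₁, hy₁, hgy₁, rfl⟩ := hQ p hp
  obtain ⟨t, ht, y₂, hy₂, hgy₂, rfl⟩ := hQ q hq
  rcases hs.eq_or_lt with rfl | hs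
  · exact ⟨0, self_mem_Ici, by simp⟩
  have hgz : g z = c := hz.1.2
  have hcomb : r • (z - v) = (a * s) • (y₁ - v) + (b * t) • (y₂ - v) := by
    linear_combination (norm := module) -hx + hab • v
  have hr : r = a * s + b * t := by
    have h := congrArg g hcomb
    simp only [map_add, map_smul, map_sub, smul_eq_mul, hgy₁, hgy₂, hgz] at h
    exact mul_right_cancel₀ (sub_ne_zero.2 hc.symm) (by linarith)
  have hr₀ : 0 < r := by rw [hr]; nlinarith [mul_pos ha hs, mul_nonneg hb.le ht]
  have hrz : r • z = (a * s) • y₁ + (b * t) • y₂ := by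
    linear_combination (norm := module) hcomb + hr • v
  have hzseg : z ∈ segment ℝ y₁ y₂ := by
    refine ⟨a * s / r, b * t / r, by positivity, by positivity, ?_, ?_⟩
    · field_simp; linarith
    · rw [← inv_smul_smul₀ hr₀.ne' z, hrz]
      module
  have hy₁z : y₁ = z := by
    rcases (mem_extremePoints_iff_forall_segment.1 hz).2 y₁ ⟨hy₁, hgy₁⟩ y₂ ⟨hy₂, hgy₂⟩ hzseg
      with h | rfl
    · exact h
    · have h : (a * s) • y₁ = (a * s) • y₂ := by
        linear_combination (norm := module) -hrz + hr • y₂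
      exact smul_right_injective E (mul_pos ha hs).ne' h
  exact ⟨s, mem_Ici.2 hs.le, by rw [hy₁z]⟩

theorem convex_image_Ici_add_smul (v w : E) : Convex ℝ ((fun t : ℝ => v + t • w) '' Ici 0) := by
  rintro _ ⟨s, hs, rfl⟩ _ ⟨t, ht, rfl⟩ a b ha hb hab
  have hs : (0 : ℝ) ≤ s := hs
  have ht : (0 : ℝ) ≤ t := ht
  refine ⟨a * s + b * t, mem_Ici.2 (by positivity), ?_⟩
  linear_combination (norm := module) -hab • v

theorem eq_segment_of_isMaxOn {L : Set E} (hL : Convex ℝ L) {v w u : E} {f : E →ₗ[ℝ] ℝ}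
    (hLv : L ⊆ (fun t : ℝ => v + t • w) '' Ici 0) (hf : 0 < f w) (hv : v ∈ L) (hu : u ∈ L)
    (hmax : IsMaxOn f L u) : L = segment ℝ v u := by
  refine subset_antisymm (fun p hp => ?_) (hL.segment_subset hv hu)
  obtain ⟨t, ht, rfl⟩ := hLv hp
  obtain ⟨r, -, rfl⟩ := hLv hu
  have htr : t ≤ r := by
    have h : f (v + t • w) ≤ f (v + r • w) := hmax hp
    simp only [map_add, map_smul, smul_eq_mul, add_le_add_iff_left] at h
    exact le_of_mul_le_mul_right h hf
  have hr : (0 : ℝ) ≤ r := le_trans ht htr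
  rw [segment_eq_image']
  refine ⟨t / r, ⟨div_nonneg ht hr, div_le_one_of_le₀ htr hr⟩, ?_⟩
  simp only [add_sub_cancel_left, smul_smul]
  rw [div_mul_cancel_of_imp fun h => le_antisymm (h ▸ htr) ht]

end RealVectorSpace

section Polytope

variable {E : Type*} [NormedAddCommGroup E] [NormedSpace ℝ E]

theorem IsCompact.convexHull_extremePoints_eq {A : Set E} (hA : IsCompact A) (hAc : Convex ℝ A)
    (hfin : (A.extremePoints ℝ).Finite) : convexHull ℝ (A.extremePoints ℝ) = A := by
  rw [← (hfin.isCompact_convexHull (𝕜 := ℝ)).isClosed.closure_eq]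
  exact closure_convexHull_extremePoints hA hAc

theorem exists_isConeOverSlice_of_mem_extremePoints {W : Set E} (hW : W.Finite) {v : E}
    (hv : v ∈ (convexHull ℝ W).extremePoints ℝ) (hWv : (W \ {v}).Nonempty) :
    ∃ (g : E →ₗ[ℝ] ℝ) (c : ℝ), g v < c ∧ IsConeOverSlice (convexHull ℝ W) v g c := by
  have hvK : v ∉ convexHull ℝ (W \ {v}) := fun h =>
    ((convex_convexHull ℝ W).mem_extremePoints_iff_mem_sdiff_convexHull_sdiff.1 hv).2
      (convexHull_mono (sdiff_subset_sdiff_left (subset_convexHull ℝ W)) h)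
  obtain ⟨g, c, hgv, hgK⟩ := geometric_hahn_banach_point_closed (convex_convexHull ℝ _)
    ((hW.sdiff (t := {v})).isCompact_convexHull (𝕜 := ℝ)).isClosed hvK
  refine ⟨g, c, hgv, ?_⟩
  rw [← insert_eq_of_mem (extremePoints_convexHull_subset hv), ← insert_sdiff_singleton,
    convexHull_insert hWv]
  exact isConeOverSlice_convexJoin hgv hgK

theorem isClosed_image_Ici_add_smul (v w : E) : IsClosed ((fun t : ℝ => v + t • w) '' Ici 0) :=
  (Homeomorph.addLeft v).isClosedMap.comp (isClosedMap_smul_left w) _ isClosed_Ici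

variable [FiniteDimensional ℝ E]

theorem IsCompact.exists_mem_extremePoints_isMaxOn {A : Set E} (hA : IsCompact A)
    (hne : A.Nonempty) (f : E →ₗ[ℝ] ℝ) : ∃ z ∈ A.extremePoints ℝ, IsMaxOn f A z := by
  have hF : IsExposed ℝ A ((LinearMap.toContinuousLinearMap f).toExposed A) :=
    ContinuousLinearMap.toExposed.isExposed
  obtain ⟨y, hy, hymax⟩ := hA.exists_isMaxOn hne f.continuous_of_finiteDimensional.continuousOn
  obtain ⟨z, hz⟩ := (hF.isCompact hA).extremePoints_nonempty ⟨y, hy, fun x hx => hymax hx⟩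
  exact ⟨z, hF.isExtreme.extremePoints_subset_extremePoints hz,
    fun x hx => (extremePoints_subset hz).2 x hx⟩

theorem exists_isExtreme_segment_of_lt {W : Set E} (hW : W.Finite) {v p₀ : E}
    (hv : v ∈ (convexHull ℝ W).extremePoints ℝ) (f : E →ₗ[ℝ] ℝ) (hp₀ : p₀ ∈ convexHull ℝ W)
    (hlt : f v < f p₀) : ∃ u, f v < f u ∧ IsExtreme ℝ (convexHull ℝ W) (segment ℝ v u) := by
  set Q := convexHull ℝ W
  have hQ : IsCompact Q := hW.isCompact_convexHull (𝕜 := ℝ)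
  have hWv : (W \ {v}).Nonempty := by
    by_contra! h
    have hQv : Q ⊆ {v} := convexHull_min (sdiff_eq_empty.1 h) (convex_singleton v)
    exact hlt.ne (congrArg f (hQv hp₀)).symm
  obtain ⟨g, c, hgv, hcone⟩ := exists_isConeOverSlice_of_mem_extremePoints hW hv hWv
  obtain ⟨s₀, hs₀, y₀, hy₀, hgy₀, rfl⟩ := hcone p₀ hp₀
  have hfy₀ : f v < f y₀ := by
    simp only [map_add, map_smul, map_sub, smul_eq_mul] at hlt
    nlinarith
  obtain ⟨z, hz, hzmax⟩ := (hQ.inter_right (isClosed_eq g.continuous_of_finiteDimensional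
    continuous_const)).exists_mem_extremePoints_isMaxOn ⟨y₀, hy₀, hgy₀⟩ f
  have hfz : f y₀ ≤ f z := hzmax ⟨hy₀, hgy₀⟩
  set ray := (fun t : ℝ => v + t • (z - v)) '' Ici 0
  have hvr : v ∈ Q ∩ ray := ⟨hv.1, 0, self_mem_Ici, by simp⟩
  have hzr : z ∈ Q ∩ ray := ⟨(extremePoints_subset hz).1, 1, mem_Ici.2 zero_le_one, by simp⟩
  obtain ⟨u, hu, humax⟩ := (hQ.inter_right (isClosed_image_Ici_add_smul v (z - v))).exists_isMaxOn
    ⟨v, hvr⟩ f.continuous_of_finiteDimensional.continuousOn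
  refine ⟨u, hfy₀.trans_le (hfz.trans (humax hzr)), ?_⟩
  rw [← eq_segment_of_isMaxOn ((convex_convexHull ℝ W).inter (convex_image_Ici_add_smul v _))
    inter_subset_right (by simpa using hfy₀.trans_le hfz) hvr hu humax]
  exact hcone.isExtreme_inter_ray hgv.ne hz

theorem exists_isMaxOn_reflTransGen_isEdge {W : Set E} (hW : W.Finite) (f : E →ₗ[ℝ] ℝ) {a : E}
    (ha : a ∈ (convexHull ℝ W).extremePoints ℝ) :
    ∃ b ∈ (convexHull ℝ W).extremePoints ℝ, IsMaxOn f (convexHull ℝ W) b ∧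
      Relation.ReflTransGen (fun p q => IsEdge (convexHull ℝ W) p q ∧ f p < f q) a b := by
  set reach := {b | Relation.ReflTransGen
    (fun p q => IsEdge (convexHull ℝ W) p q ∧ f p < f q) a b}
  have hreach : reach ⊆ (convexHull ℝ W).extremePoints ℝ := fun b hb => by
    rcases hb.cases_tail with rfl | ⟨_, -, hedge, -⟩
    exacts [ha, hedge.right_mem_extremePoints]
  obtain ⟨b, hb, hbmax⟩ := exists_max_image reach f
    (hW.subset (hreach.trans extremePoints_convexHull_subset)) ⟨a, .refl⟩
  refine ⟨b, hreach hb, fun p hp => show f p ≤ f b from not_lt.1 fun hlt => ?_, hb⟩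
  obtain ⟨u, hbu, hedge⟩ := exists_isExtreme_segment_of_lt hW (hreach hb) f hp hlt
  exact (hbmax u (hb.tail ⟨⟨ne_of_apply_ne f hbu.ne, hedge⟩, hbu⟩)).not_gt hbu

theorem IsCompact.reflTransGen_isEdge {A : Set E} (hA : IsCompact A) (hAc : Convex ℝ A)
    (hfin : (A.extremePoints ℝ).Finite) {a b : E} (ha : a ∈ A.extremePoints ℝ)
    (hb : b ∈ A.extremePoints ℝ) : Relation.ReflTransGen (IsEdge A) a b := by
  rw [← hA.convexHull_extremePoints_eq hAc hfin] at ha hb ⊢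
  obtain ⟨h, hinj⟩ := exists_dual_injOn (K := ℝ) hfin
  obtain ⟨a', ha', ha'max, hpa⟩ := exists_isMaxOn_reflTransGen_isEdge hfin h ha
  obtain ⟨b', hb', hb'max, hpb⟩ := exists_isMaxOn_reflTransGen_isEdge hfin h hb
  obtain rfl : a' = b' := hinj (extremePoints_convexHull_subset ha')
    (extremePoints_convexHull_subset hb') (le_antisymm (hb'max ha'.1) (ha'max hb'.1))
  have hedge : (fun p q => IsEdge (convexHull ℝ (A.extremePoints ℝ)) p q ∧ h p < h q) ≤
      IsEdge (convexHull ℝ (A.extremePoints ℝ)) := fun _ _ => And.left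
  exact (Relation.ReflTransGen.mono hedge _ _ hpa).trans
    (symm (Relation.ReflTransGen.mono hedge _ _ hpb))

theorem reflTransGen_isEdgeAvoiding_of_isMaxOn {V S : Set E} (hV : V.Finite) {f : E →ₗ[ℝ] ℝ}
    (hS : ∀ s ∈ S, ∃ p ∈ convexHull ℝ V, f s < f p) {a b : E}
    (ha : a ∈ (convexHull ℝ V).extremePoints ℝ) (hb : b ∈ (convexHull ℝ V).extremePoints ℝ)
    (hfa : IsMaxOn f (convexHull ℝ V) a) (hfb : IsMaxOn f (convexHull ℝ V) b) :
    Relation.ReflTransGen (IsEdgeAvoiding (convexHull ℝ V) S) a b := by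
  set P := convexHull ℝ V
  set T := (LinearMap.toContinuousLinearMap f).toExposed P
  have hT : IsExposed ℝ P T := ContinuousLinearMap.toExposed.isExposed
  have hTP : T.extremePoints ℝ ⊆ P.extremePoints ℝ :=
    hT.isExtreme.extremePoints_subset_extremePoints
  have hTS : ∀ {p}, p ∈ T.extremePoints ℝ → p ∈ P.extremePoints ℝ \ S := fun hp =>
    ⟨hTP hp, fun hpS => by
      obtain ⟨q, hq, hlt⟩ := hS _ hpS
      exact ((extremePoints_subset hp).2 q hq).not_gt hlt⟩
  have hmemT : ∀ {p}, p ∈ P.extremePoints ℝ → IsMaxOn f P p → p ∈ T.extremePoints ℝ :=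
    fun hp hpmax => inter_extremePoints_subset_extremePoints_of_subset hT.subset
      ⟨⟨hp.1, hpmax⟩, hp⟩
  refine Relation.ReflTransGen.mono (fun p q hpq => ?_) _ _
    ((hT.isCompact (hV.isCompact_convexHull (𝕜 := ℝ))).reflTransGen_isEdge
      (hT.convex (convex_convexHull ℝ V)) (hV.subset (hTP.trans extremePoints_convexHull_subset))
      (hmemT ha hfa) (hmemT hb hfb))
  exact ⟨hTS hpq.left_mem_extremePoints, hTS hpq.right_mem_extremePoints,
    hpq.of_isExtreme hT.isExtreme⟩

theorem reflTransGen_isEdgeAvoiding_of_le {V S : Set E} (hV : V.Finite) {f : E →ₗ[ℝ] ℝ}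
    {x y : E} (hS : ∀ s ∈ S, f s = f x) (hx : x ∈ (convexHull ℝ V).extremePoints ℝ \ S)
    (hy : y ∈ (convexHull ℝ V).extremePoints ℝ \ S) (hxy : f x ≤ f y)
    (hlt : ∃ p ∈ convexHull ℝ V, f x < f p) :
    Relation.ReflTransGen (IsEdgeAvoiding (convexHull ℝ V) S) x y := by
  obtain ⟨x', hx', hx'max, hpx⟩ := exists_isMaxOn_reflTransGen_isEdge hV f hx.1
  obtain ⟨y', hy', hy'max, hpy⟩ := exists_isMaxOn_reflTransGen_isEdge hV f hy.1
  have htop := reflTransGen_isEdgeAvoiding_of_isMaxOn hV (fun s hs => hS s hs ▸ hlt)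
    hx' hy' hx'max hy'max
  refine (reflTransGen_isEdgeAvoiding_of_increasing hx (fun s hs => (hS s hs).le) hpx).trans
    (htop.trans (symm ?_))
  exact reflTransGen_isEdgeAvoiding_of_increasing hy (fun s hs => (hS s hs).trans_le hxy) hpy

theorem reflTransGen_isEdgeAvoiding_of_card_lt_finrank {V : Set E} (hV : V.Finite)
    (hfull : affineSpan ℝ (convexHull ℝ V) = ⊤) {S : Finset E} (hS : S.card < Module.finrank ℝ E)
    {x y : E} (hx : x ∈ (convexHull ℝ V).extremePoints ℝ \ S)
    (hy : y ∈ (convexHull ℝ V).extremePoints ℝ \ S) :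
    Relation.ReflTransGen (IsEdgeAvoiding (convexHull ℝ V) S) x y := by
  obtain ⟨f, hf, hfS⟩ := exists_dual_ne_zero_apply_eq_of_card_lt_finrank hS x
  obtain ⟨p, hp, hpx⟩ := exists_apply_ne_of_affineSpan_eq_top hfull hf x
  have hnegS : ∀ s ∈ (S : Set E), (-f) s = (-f) x := fun s hs => by simp [hfS s hs]
  have hyP := extremePoints_subset hy.1
  rcases lt_trichotomy (f x) (f y) with hxy | hxy | hxy
  · exact reflTransGen_isEdgeAvoiding_of_le hV hfS hx hy hxy.le ⟨y, hyP, hxy⟩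
  · rcases hpx.lt_or_gt with hpx | hpx
    · exact reflTransGen_isEdgeAvoiding_of_le hV hnegS hx hy (by simp [hxy]) ⟨p, hp, by simpa⟩
    · exact reflTransGen_isEdgeAvoiding_of_le hV hfS hx hy hxy.le ⟨p, hp, hpx⟩
  · exact reflTransGen_isEdgeAvoiding_of_le hV hnegS hx hy (by simpa using hxy.le)
      ⟨y, hyP, by simpa⟩

end Polytope

theorem balinski_general {d : ℕ} (P : Set (Fin d → ℝ)) (V : Finset (Fin d → ℝ))
    (hP : P = convexHull ℝ (V : Set (Fin d → ℝ)))
    (hfull : affineSpan ℝ P = ⊤)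
    (S : Finset (Fin d → ℝ))
    (hcard : S.card ≤ d - 1) :
    ∀ x ∈ Set.extremePoints ℝ P \ S, ∀ y ∈ Set.extremePoints ℝ P \ S,
      Relation.ReflTransGen
        (fun a b : Fin d → ℝ =>
          a ∈ Set.extremePoints ℝ P \ S ∧ b ∈ Set.extremePoints ℝ P \ S ∧
          a ≠ b ∧ IsExtreme ℝ P (segment ℝ a b)) x y := by
  intro x hx y hy
  rcases Nat.eq_zero_or_pos d with rfl | hd
  · rw [Subsingleton.elim x y]
  subst hP
  exact reflTransGen_isEdgeAvoiding_of_card_lt_finrank V.finite_toSet hfull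
    (by rw [Module.finrank_fin_fun]; omega) hx hy

/-- Balinski's theorem.  The edge graph of a full-dimensional convex
polytope `P ⊂ ℝ^d` is `d`-connected: deleting any `d - 1` vertices leaves it
connected. -/
theorem balinski {d : ℕ} (P : Set (Fin d → ℝ)) (V : Finset (Fin d → ℝ))
    (hP : P = convexHull ℝ (V : Set (Fin d → ℝ)))
    (hfull : affineSpan ℝ P = ⊤)
    (S : Finset (Fin d → ℝ)) (hS : (S : Set (Fin d → ℝ)) ⊆ Set.extremePoints ℝ P)
    (hcard : S.card ≤ d - 1) :
    ∀ x ∈ Set.extremePoints ℝ P \ S, ∀ y ∈ Set.extremePoints ℝ P \ S,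
      Relation.ReflTransGen
        (fun a b : Fin d → ℝ =>
          a ∈ Set.extremePoints ℝ P \ S ∧ b ∈ Set.extremePoints ℝ P \ S ∧
          a ≠ b ∧ IsExtreme ℝ P (segment ℝ a b)) x y :=
  balinski_general P V hP hfull S hcard
end

section
/- The two-dimensional fan in ℝ^5 that is the union of the standard tropical plane in span{e_1,e_2,e_3} and the standard tropical plane in span{e_1,e4,e_5}, glued along the ray through e_1, is not 2-connected through codimension one: removing a single closed 2-dimensional cone containing the ray e_1 disconnects its facet-ridge graph. -/
/-- The faces of the two-dimensional fan in `ℝ^5` consisting of the standard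
tropical planes in `span{e₁,e₂,e₃}` and `span{e₁,e₄,e₅}`, glued along the ray
through `e₁`. -/
def twoPlanesFan : Set (Set (Fin 5 → ℝ)) :=
  {{(0 : Fin 5 → ℝ)}} ∪
  {ray ![1,0,0,0,0], ray ![0,1,0,0,0], ray ![0,0,1,0,0], ray ![-1,-1,-1,0,0],
   ray ![0,0,0,1,0], ray ![0,0,0,0,1], ray ![-1,0,0,-1,-1]} ∪
  {cone2 ![1,0,0,0,0] ![0,1,0,0,0], cone2 ![1,0,0,0,0] ![0,0,1,0,0],
   cone2 ![1,0,0,0,0] ![-1,-1,-1,0,0], cone2 ![0,1,0,0,0] ![0,0,1,0,0],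
   cone2 ![0,1,0,0,0] ![-1,-1,-1,0,0], cone2 ![0,0,1,0,0] ![-1,-1,-1,0,0],
   cone2 ![1,0,0,0,0] ![0,0,0,1,0], cone2 ![1,0,0,0,0] ![0,0,0,0,1],
   cone2 ![1,0,0,0,0] ![-1,0,0,-1,-1], cone2 ![0,0,0,1,0] ![0,0,0,0,1],
   cone2 ![0,0,0,1,0] ![-1,0,0,-1,-1], cone2 ![0,0,0,0,1] ![-1,0,0,-1,-1]}

/-!
Delete the facet `cone2 e₁ e₂`. Every face of the fan either lies in `span{e₁,e₂,e₃}` or meets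
that subspace only inside the ray through `e₁`, hence inside the deleted facet. So no surviving
ridge joins a facet of the first plane to a facet of the second, and the facet-ridge graph
cannot get from `cone2 e₂ e₃` to `cone2 e₄ e₅`.
-/

namespace PolyhedralComplex

variable {n : ℕ}

theorem subset_of_reflTransGen_adj {C : PolyhedralComplex n} {d : ℕ}
    {G : Finset (Set (Fin n → ℝ))} {S : Set (Fin n → ℝ)}
    (hS : ∀ F ∈ C.faces, F ⊆ S ∨ ∃ F' ∈ G, F ∩ S ⊆ F') {P Q : Set (Fin n → ℝ)}
    (hPQ : Relation.ReflTransGen (C.Adj d G) P Q) (hP : P ⊆ S) : Q ⊆ S := by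
  induction hPQ with
  | refl => exact hP
  | tail _ hAB ih =>
    obtain ⟨-, hB, -, -, R, -, hRA, hRB, hRG⟩ := hAB
    refine (hS _ hB.1).resolve_right ?_
    rintro ⟨F', hF', hBS⟩
    exact hRG F' hF' fun x hx => hBS ⟨hRB hx, ih (hRA hx)⟩

theorem not_connectedThroughCodimOne_two {C : PolyhedralComplex n} {d : ℕ}
    {F P Q S : Set (Fin n → ℝ)} (hF : F ∈ C.facets d) (hP : P ∈ C.facets d)
    (hQ : Q ∈ C.facets d) (hPF : P ≠ F) (hQF : Q ≠ F) (hPS : P ⊆ S) (hQS : ¬ Q ⊆ S)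
    (hS : ∀ F' ∈ C.faces, F' ⊆ S ∨ F' ∩ S ⊆ F) :
    ¬ C.ConnectedThroughCodimOne d 2 := by
  intro hC
  have hPQ := hC {F} (by simpa using hF) (by simp) P hP Q hQ (by simpa using hPF)
    (by simpa using hQF)
  refine hQS (subset_of_reflTransGen_adj (fun F' hF' => ?_) hPQ hPS)
  exact (hS F' hF').imp_right fun h => ⟨F, Finset.mem_singleton_self F, h⟩

end PolyhedralComplex

section Cone2

variable {n : ℕ}

theorem left_mem_cone2 (u v : Fin n → ℝ) : u ∈ cone2 u v :=
  ⟨1, 0, zero_le_one, le_rfl, by simp⟩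

theorem right_mem_cone2 (u v : Fin n → ℝ) : v ∈ cone2 u v :=
  ⟨0, 1, le_rfl, zero_le_one, by simp⟩

theorem ray_subset_cone2 (u v : Fin n → ℝ) : ray u ⊆ cone2 u v := by
  rintro x ⟨t, ht, rfl⟩
  exact ⟨t, 0, ht, le_rfl, by simp⟩

theorem vectorSpan_cone2 (u v : Fin n → ℝ) :
    vectorSpan ℝ (cone2 u v) = Submodule.span ℝ {u, v} := by
  have h0 : (0 : Fin n → ℝ) ∈ cone2 u v := ⟨0, 0, le_rfl, le_rfl, by simp⟩
  apply le_antisymm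
  · rw [vectorSpan_def, Submodule.span_le]
    rintro _ ⟨_, ⟨s₁, t₁, -, -, rfl⟩, _, ⟨s₂, t₂, -, -, rfl⟩, rfl⟩
    have hsub : (s₁ • u + t₁ • v) -ᵥ (s₂ • u + t₂ • v) = (s₁ - s₂) • u + (t₁ - t₂) • v := by
      simp only [vsub_eq_sub, sub_smul]; abel
    simp only [hsub]
    exact add_mem (Submodule.smul_mem _ _ (Submodule.subset_span (by simp)))
      (Submodule.smul_mem _ _ (Submodule.subset_span (by simp)))
  · rw [Submodule.span_le]
    rintro x (rfl | rfl)
    · simpa using vsub_mem_vectorSpan ℝ (left_mem_cone2 x v) h0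
    · simpa using vsub_mem_vectorSpan ℝ (right_mem_cone2 u x) h0

theorem polyDim_cone2 {u v : Fin n → ℝ} (h : LinearIndependent ℝ ![u, v]) :
    polyDim (cone2 u v) = 2 := by
  rw [polyDim, vectorSpan_cone2, ← Matrix.range_cons_cons_empty, finrank_span_eq_card h]
  simp

theorem linearIndependent_pair_of_apply {u v : Fin n → ℝ} {i j : Fin n} (hui : u i = 1)
    (huj : u j = 0) (hvi : v i = 0) (hvj : v j = 1) : LinearIndependent ℝ ![u, v] := by
  refine LinearIndependent.pair_iff.2 fun s t h => ⟨?_, ?_⟩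
  · simpa [hui, hvi] using congrFun h i
  · simpa [huj, hvj] using congrFun h j

end Cone2

theorem twoPlanesFan_subset_or_inter_subset_ray {F : Set (Fin 5 → ℝ)} (hF : F ∈ twoPlanesFan) :
    F ⊆ {x | x 3 = 0 ∧ x 4 = 0} ∨ F ∩ {x | x 3 = 0 ∧ x 4 = 0} ⊆ ray ![1,0,0,0,0] := by
  simp only [twoPlanesFan, Set.mem_union, Set.mem_insert_iff, Set.mem_singleton_iff] at hF
  rcases hF with (rfl | hF) | hF
  · left; simp
  · rcases hF with rfl | rfl | rfl | rfl | rfl | rfl | rfl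
    all_goals first
      | left; rintro x ⟨t, -, rfl⟩; simp; done
      | right; rintro x ⟨⟨t, -, rfl⟩, h₃, h₄⟩
        refine ⟨0, le_rfl, funext fun i => ?_⟩
        fin_cases i <;>
          simp only [Fin.isValue, Fin.zero_eta, Fin.mk_one, Fin.reduceFinMk, Matrix.cons_val,
            Matrix.cons_val_zero, Matrix.cons_val_one, Pi.smul_apply, smul_eq_mul, mul_zero,
            mul_one, mul_neg] at h₃ h₄ ⊢ <;>
          linarith
  · rcases hF with rfl | rfl | rfl | rfl | rfl | rfl | rfl | rfl | rfl | rfl | rfl | rfl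
    all_goals first
      | left; rintro x ⟨s, t, -, -, rfl⟩; simp; done
      -- `x₃ = x₄ = 0` forces the coefficient of every generator other than `e₁` to vanish
      | right; rintro x ⟨⟨s, t, hs, -, rfl⟩, h₃, h₄⟩
        refine ⟨s, hs, funext fun i => ?_⟩
        fin_cases i <;>
          simp only [Fin.isValue, Fin.zero_eta, Fin.mk_one, Fin.reduceFinMk, Matrix.cons_val,
            Matrix.cons_val_zero, Matrix.cons_val_one, Pi.add_apply, Pi.smul_apply, smul_eq_mul,
            mul_zero, mul_one, mul_neg, add_zero, zero_add] at h₃ h₄ ⊢ <;>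
          linarith

/-- Example 1.4: the union of two standard tropical planes in `ℝ^5`
glued along the ray through `e₁` is not 2-connected through codimension one:
removing a single closed facet containing that ray disconnects the facet-ridge
graph. -/
theorem two_planes_fan_not_two_connected
    (C : PolyhedralComplex 5) (hC : C.faces = twoPlanesFan) :
    ¬ C.ConnectedThroughCodimOne 2 2 := by
  have facet : ∀ {u v : Fin 5 → ℝ} {i j : Fin 5}, cone2 u v ∈ twoPlanesFan → u i = 1 → u j = 0 →
      v i = 0 → v j = 1 → cone2 u v ∈ C.facets 2 := fun hF hui huj hvi hvj =>
    ⟨hC ▸ hF, polyDim_cone2 (linearIndependent_pair_of_apply hui huj hvi hvj)⟩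
  refine PolyhedralComplex.not_connectedThroughCodimOne_two
    (F := cone2 ![1,0,0,0,0] ![0,1,0,0,0]) (P := cone2 ![0,1,0,0,0] ![0,0,1,0,0])
    (Q := cone2 ![0,0,0,1,0] ![0,0,0,0,1]) (S := {x | x 3 = 0 ∧ x 4 = 0})
    (facet (i := 0) (j := 1) (by simp [twoPlanesFan]) rfl rfl rfl rfl)
    (facet (i := 1) (j := 2) (by simp [twoPlanesFan]) rfl rfl rfl rfl)
    (facet (i := 3) (j := 4) (by simp [twoPlanesFan]) rfl rfl rfl rfl)
    (fun h => ?_) (fun h => ?_) ?_ (fun h => ?_) fun F hF => ?_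
  · obtain ⟨_, _, -, -, he₃⟩ := h ▸ right_mem_cone2 ![(0 : ℝ),1,0,0,0] ![0,0,1,0,0]
    simpa using congrFun he₃ 2
  · obtain ⟨_, _, -, -, he₄⟩ := h ▸ left_mem_cone2 ![(0 : ℝ),0,0,1,0] ![0,0,0,0,1]
    simpa using congrFun he₄ 3
  · rintro x ⟨s, t, -, -, rfl⟩; simp
  · simpa using (h (left_mem_cone2 _ _)).1
  · exact (twoPlanesFan_subset_or_inter_subset_ray (hC ▸ hF)).imp_right
      (·.trans (ray_subset_cone2 _ _))
end

section
/- For a loopless matroid M and an element i of the ground set, the set of flats of M containing i is in natural inclusion-preserving bijection with the flats of the contraction M/i; consequently, the star of the Bergman fan of M (fine subdivision) at the ray of the rank-one flat containing i is the Bergman fan of M/i with its fine subdivision. -/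
/-!
Closure in `M / i` is closure in `M` after adjoining `i`, so a set `G ⊆ E \ {i}` is closed in
`M / i` exactly when `insert i G` is closed in `M`. Hence `F ↦ F \ {i}` and `G ↦ insert i G` are
mutually inverse between the flats of `M` containing `i` and the flats of `M / i`, and removing
`i` from sets that both contain it neither creates nor destroys inclusions.
-/

open Set

theorem Set.sdiff_singleton_subset_sdiff_singleton_iff {α : Type*} {s t : Set α} {a : α}
    (ht : a ∈ t) : s \ {a} ⊆ t \ {a} ↔ s ⊆ t := by
  rw [sdiff_singleton_subset_iff, insert_sdiff_self_of_mem ht]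

theorem Set.injOn_sdiff_singleton {α : Type*} (a : α) :
    InjOn (· \ {a}) {s : Set α | a ∈ s} := fun s (hs : a ∈ s) t (ht : a ∈ t) hst => by
  rw [← insert_sdiff_self_of_mem hs, ← insert_sdiff_self_of_mem ht]
  exact congrArg (insert a) hst

namespace Matroid

variable {α : Type*} {M N : Matroid α} {i : α}

theorem IsFlat.sdiff_singleton_of_closure_eq_closure_insert
    (hNcl : ∀ X ⊆ M.E \ {i}, N.closure X = M.closure (insert i X) \ {i})
    {F : Set α} (hF : M.IsFlat F) (hiF : i ∈ F) : N.IsFlat (F \ {i}) := by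
  have hFE : F \ {i} ⊆ M.E \ {i} := sdiff_subset_sdiff_left hF.subset_ground
  rw [isFlat_iff_closure_eq, hNcl _ hFE, insert_sdiff_self_of_mem hiF, hF.closure]

theorem IsFlat.insert_of_closure_eq_closure_insert (hi : i ∈ M.E) (hNE : N.E = M.E \ {i})
    (hNcl : ∀ X ⊆ M.E \ {i}, N.closure X = M.closure (insert i X) \ {i})
    {G : Set α} (hG : N.IsFlat G) : M.IsFlat (insert i G) := by
  have hGE : G ⊆ M.E \ {i} := hNE ▸ hG.subset_ground
  have hi_cl : i ∈ M.closure (insert i G) :=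
    M.subset_closure _ (insert_subset hi (hGE.trans sdiff_subset)) (mem_insert i G)
  have hcl : M.closure (insert i G) \ {i} = G := by rw [← hNcl G hGE, hG.closure]
  rw [isFlat_iff_closure_eq, ← insert_sdiff_self_of_mem hi_cl, hcl]

end Matroid

theorem flats_containing_biject_contraction_flats_general
    {α : Type*} (M N : Matroid α) (i : α) (hi : i ∈ M.E)
    (hNE : N.E = M.E \ {i})
    (hNcl : ∀ X ⊆ M.E \ {i}, N.closure X = M.closure (insert i X) \ {i}) :
    Set.BijOn (fun F => F \ {i}) {F | M.IsFlat F ∧ i ∈ F} {G | N.IsFlat G} ∧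
    (∀ F F' : Set α, M.IsFlat F → i ∈ F → M.IsFlat F' → i ∈ F' →
      (F ⊆ F' ↔ F \ {i} ⊆ F' \ {i})) := by
  refine ⟨⟨?mapsTo, ?injOn, ?surjOn⟩, ?subset_iff⟩
  case mapsTo =>
    exact fun F ⟨hF, hiF⟩ => hF.sdiff_singleton_of_closure_eq_closure_insert hNcl hiF
  case injOn => exact (injOn_sdiff_singleton i).mono fun F hF => hF.2
  case surjOn =>
    intro G (hG : N.IsFlat G)
    have hiG : i ∉ G := fun h => ((hNE ▸ hG.subset_ground) h).2 rfl
    exact ⟨insert i G, ⟨hG.insert_of_closure_eq_closure_insert hi hNE hNcl, mem_insert i G⟩,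
      insert_sdiff_self_of_notMem hiG⟩
  case subset_iff =>
    exact fun F F' _ _ _ hiF' => (sdiff_singleton_subset_sdiff_singleton_iff hiF').symm

/-- for a loopless matroid `M` and an element `i` of its ground set,
the map `F ↦ F \ {i}` is an inclusion-preserving bijection from the flats of `M`
containing `i` onto the flats of the contraction `M/i` (characterized here by its
ground set `M.E \ {i}` and its closure operator `X ↦ cl_M(X ∪ {i}) \ {i}`). -/
theorem flats_containing_biject_contraction_flats
    {α : Type*} (M N : Matroid α) (i : α) (hi : i ∈ M.E)
    (hloopless : M.closure ∅ = ∅)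
    (hNE : N.E = M.E \ {i})
    (hNcl : ∀ X ⊆ M.E \ {i}, N.closure X = M.closure (insert i X) \ {i}) :
    Set.BijOn (fun F => F \ {i}) {F | M.IsFlat F ∧ i ∈ F} {G | N.IsFlat G} ∧
    (∀ F F' : Set α, M.IsFlat F → i ∈ F → M.IsFlat F' → i ∈ F' →
      (F ⊆ F' ↔ F \ {i} ⊆ F' \ {i})) :=
  flats_containing_biject_contraction_flats_general M N i hi hNE hNcl
end
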